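/- arXiv:1407.0727 — 3 statements merged into one kernel-verified Lean document; each statement's English description precedes it below -/
import Mathlib

section
/- Fix n ≥ 1, constants x_b > 0, ρ > 0, θ_i ≥ 0, and fix the other players' votes x_j ∈ [0, x_b] for j ≠ i. Then the function x_i ↦ f_i(x_i, x_{-i}) = -(x̄ - x_i)² + θ_i · ln(ρ(x_b - x_i)/(n x_b - Σ_{j=1}^n x_j)) is concave on the interval [0, x_b). -/
/-!
Let `S` be the sum of the other votes and `b = n x_b - S`; since every other vote is at most
`x_b`, we have `b ≥ x_b`. As a function of the own vote `t`, the comfort term is minus the square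
of an affine function, and the log term is `log ρ + log ((x_b - t) / (b - t))`. For `t < x_b` the
ratio `(x_b - t) / (b - t) = 1 - (b - x_b) / (b - t)` is positive and, because `t ↦ (b - t)⁻¹` is
convex, concave; the logarithm of a positive concave function is concave.
-/

open Set

lemma Finset.sum_update_le_card_nsmul {ι M : Type*} [Fintype ι] [DecidableEq ι]
    [AddCommMonoid M] [PartialOrder M] [IsOrderedAddMonoid M] {x : ι → M} {i : ι} {c : M}
    (hx : ∀ j, j ≠ i → x j ≤ c) : ∑ j, Function.update x i c j ≤ Fintype.card ι • c := by
  refine Finset.sum_le_card_nsmul _ _ _ fun j _ => ?_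
  rcases eq_or_ne j i with rfl | hj
  · simp
  · simpa [hj] using hx j hj

lemma ConcaveOn.log {E : Type*} [AddCommMonoid E] [Module ℝ E] {s : Set E} {f : E → ℝ}
    (hf : ConcaveOn ℝ s f) (hpos : ∀ x ∈ s, 0 < f x) :
    ConcaveOn ℝ s fun x => Real.log (f x) := by
  refine ⟨hf.1, fun x hx y hy a b ha hb hab => ?_⟩
  have hcomb : 0 < a • f x + b • f y := convex_Ioi (0 : ℝ) (hpos x hx) (hpos y hy) ha hb hab
  calc a • Real.log (f x) + b • Real.log (f y) ≤ Real.log (a • f x + b • f y) :=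
        strictConcaveOn_log_Ioi.concaveOn.2 (hpos x hx) (hpos y hy) ha hb hab
    _ ≤ Real.log (f (a • x + b • y)) := Real.log_le_log hcomb (hf.2 hx hy ha hb hab)

lemma convexOn_sq_affine (a c : ℝ) : ConvexOn ℝ univ fun t : ℝ => (a * t + c) ^ 2 :=
  ((Even.convexOn_pow (𝕜 := ℝ) even_two).comp_affineMap
    (a • AffineMap.id ℝ ℝ + AffineMap.const ℝ ℝ c)).congr fun t _ => by simp

lemma convexOn_inv_sub (b : ℝ) : ConvexOn ℝ (Iio b) fun t : ℝ => (b - t)⁻¹ := by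
  have h := (convexOn_zpow (𝕜 := ℝ) (-1)).comp_affineMap
    (AffineMap.const ℝ ℝ b - AffineMap.id ℝ ℝ)
  rw [show (AffineMap.const ℝ ℝ b - AffineMap.id ℝ ℝ) ⁻¹' Ioi 0 = Iio b by ext; simp] at h
  exact h.congr fun t _ => by simp

lemma concaveOn_sub_div_sub {a b : ℝ} (hab : a ≤ b) :
    ConcaveOn ℝ (Iio b) fun t : ℝ => (a - t) / (b - t) := by
  refine (((convexOn_inv_sub b).smul (sub_nonneg.2 hab)).neg.add_const 1).congr fun t ht => ?_
  have : b - t ≠ 0 := (sub_pos.2 ht).ne'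
  simp only [Pi.add_apply, Pi.neg_apply, smul_eq_mul]
  field_simp
  ring

lemma concaveOn_log_sub_div_sub {a b : ℝ} (hab : a ≤ b) :
    ConcaveOn ℝ (Iio a) fun t : ℝ => Real.log ((a - t) / (b - t)) :=
  ((concaveOn_sub_div_sub hab).subset (Iio_subset_Iio hab) (convex_Iio a)).log fun _ ht =>
    div_pos (sub_pos.2 ht) (sub_pos.2 (ht.trans_le hab))

theorem utility_concaveOn_general (n : ℕ) (xb ρ θ : ℝ)
    (hρ : 0 < ρ) (hθ : 0 ≤ θ)
    (i : Fin n) (x : Fin n → ℝ) (hx : ∀ j, j ≠ i → x j ∈ Icc 0 xb) :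
    ConcaveOn ℝ (Ico 0 xb) (fun t : ℝ =>
      -((1 / (n : ℝ)) * (∑ j, Function.update x i t j) - t) ^ 2
        + θ * Real.log (ρ * (xb - t) / ((n : ℝ) * xb - ∑ j, Function.update x i t j))) := by
  set S := ∑ j ∈ Finset.univ \ {i}, x j
  have hsum (t : ℝ) : ∑ j, Function.update x i t j = t + S :=
    Finset.sum_update_of_mem (Finset.mem_univ i) _ _
  have hxb_le : xb ≤ n * xb - S := by
    have := Finset.sum_update_le_card_nsmul fun j hj => (hx j hj).2
    rw [hsum, Fintype.card_fin, nsmul_eq_mul] at this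
    linarith
  have hcomfort := (convexOn_sq_affine (1 / n - 1) (S / n)).neg.subset (subset_univ _)
    (convex_Iio xb)
  have hwin := ((concaveOn_log_sub_div_sub hxb_le).add_const (Real.log ρ)).smul hθ
  refine ((hcomfort.add hwin).subset Ico_subset_Iio_self (convex_Ico 0 xb)).congr fun t ht => ?_
  have hratio : 0 < (xb - t) / (n * xb - S - t) :=
    div_pos (by linarith [ht.2]) (by linarith [ht.2])
  simp only [Pi.add_apply, Pi.neg_apply, smul_eq_mul, hsum]
  rw [show (n : ℝ) * xb - (t + S) = n * xb - S - t by ring, mul_div_assoc,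
    Real.log_mul hρ.ne' hratio.ne']
  ring

/-- Player i's full utility `f_i = ψ_i + θ_i φ_i` is concave in her own vote
on `[0, x_b)`, given the other votes lie in `[0, x_b]` and `θ_i ≥ 0`. -/
theorem utility_concaveOn (n : ℕ) (hn : 1 ≤ n) (xb ρ θ : ℝ)
    (hxb : 0 < xb) (hρ : 0 < ρ) (hθ : 0 ≤ θ)
    (i : Fin n) (x : Fin n → ℝ) (hx : ∀ j, j ≠ i → x j ∈ Icc 0 xb) :
    ConcaveOn ℝ (Ico 0 xb) (fun t : ℝ =>
      -((1 / (n : ℝ)) * (∑ j, Function.update x i t j) - t) ^ 2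
        + θ * Real.log (ρ * (xb - t) / ((n : ℝ) * xb - ∑ j, Function.update x i t j))) :=
  utility_concaveOn_general n xb ρ θ hρ hθ i x hx
end

section
/- Let F : ℝⁿ → ℝⁿ satisfy the strong monotonicity condition ⟨F(x) - F(y), x - y⟩ ≤ -c ‖x - y‖² for all x, y ∈ ℝⁿ, where c > 0, and let x* ∈ ℝⁿ satisfy F(x*) = 0. Then every differentiable curve x : [0, ∞) → ℝⁿ with x'(t) = F(x(t)) for all t ≥ 0 satisfies ‖x(t) - x*‖ ≤ e^{-c t} ‖x(0) - x*‖ for all t ≥ 0; in particular x(t) → x* as t → ∞, so x* is globally asymptotically stable. -/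
/-!
Along a trajectory of `ẋ = F(x)` the squared distance `V = ‖x - x*‖²` has derivative
`2⟪F(x) - F(x*), x - x*⟫ ≤ -2c V`, so Grönwall's inequality gives `V(t) ≤ e^{-2ct} V(0)`;
taking square roots yields the exponential bound, and exponential decay forces convergence.
-/

open Real Set Filter Topology
open scoped RealInnerProductSpace

theorem le_mul_exp_of_hasDerivWithinAt_le {V V' : ℝ → ℝ} {k : ℝ}
    (hV : ∀ t ≥ 0, HasDerivWithinAt V (V' t) (Ici 0) t) (hV' : ∀ t ≥ 0, V' t ≤ k * V t)
    {t : ℝ} (ht : 0 ≤ t) : V t ≤ V 0 * exp (k * t) := by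
  have hcont : ContinuousOn V (Icc 0 t) := fun s hs =>
    (hV s hs.1).continuousWithinAt.mono Icc_subset_Ici_self
  have hslope : ∀ s ∈ Ico 0 t, ∀ r, V' s < r →
      ∃ᶠ z in 𝓝[>] s, (z - s)⁻¹ * (V z - V s) < r := fun s hs r hr =>
    (((hV s hs.1).mono (Ici_subset_Ici.2 hs.1)).liminf_right_slope_le hr).mono fun z hz => by
      simpa only [slope_def_field, div_eq_inv_mul] using hz
  simpa [gronwallBound_ε0] using le_gronwallBound_of_liminf_deriv_right_le (K := k) (ε := 0)
    hcont hslope le_rfl (fun s hs => by simpa using hV' s hs.1) t ⟨ht, le_rfl⟩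

theorem norm_sub_le_exp_mul_of_inner_deriv_le {E : Type*} [NormedAddCommGroup E]
    [InnerProductSpace ℝ E] {x v : ℝ → E} {a : E} {c : ℝ}
    (hx : ∀ t ≥ 0, HasDerivWithinAt x (v t) (Ici 0) t)
    (hv : ∀ t ≥ 0, ⟪v t, x t - a⟫ ≤ -c * ‖x t - a‖ ^ 2) {t : ℝ} (ht : 0 ≤ t) :
    ‖x t - a‖ ≤ exp (-c * t) * ‖x 0 - a‖ := by
  have hsq : ‖x t - a‖ ^ 2 ≤ ‖x 0 - a‖ ^ 2 * exp (-2 * c * t) :=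
    le_mul_exp_of_hasDerivWithinAt_le (fun s hs => ((hx s hs).sub_const a).norm_sq)
      (fun s hs => by linarith [real_inner_comm (v s) (x s - a), hv s hs]) ht
  have hexp : exp (-2 * c * t) = exp (-c * t) ^ 2 := by rw [← exp_nat_mul]; ring_nf
  rw [hexp, ← mul_pow, mul_comm] at hsq
  exact (pow_le_pow_iff_left₀ (norm_nonneg _) (by positivity) two_ne_zero).1 hsq

theorem tendsto_of_norm_sub_le_exp_mul {E : Type*} [SeminormedAddCommGroup E] {x : ℝ → E}
    {a : E} {c C : ℝ} (hc : 0 < c) (h : ∀ t ≥ 0, ‖x t - a‖ ≤ exp (-c * t) * C) :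
    Tendsto x atTop (𝓝 a) := by
  have hdecay : Tendsto (fun t => exp (-c * t) * C) atTop (𝓝 0) := by
    simpa using (tendsto_exp_atBot.comp
      (tendsto_id.const_mul_atTop_of_neg (neg_neg_of_pos hc))).mul_const C
  exact tendsto_iff_norm_sub_tendsto_zero.2 <|
    squeeze_zero' (.of_forall fun _ => norm_nonneg _) ((eventually_ge_atTop 0).mono h) hdecay

/-- Strong monotonicity `⟨F(x) - F(y), x - y⟩ ≤ -c‖x - y‖²` with `F(x*) = 0`
implies every solution of `ẋ = F(x)` converges exponentially to `x*`, which
is thus globally asymptotically stable. -/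
theorem global_exp_convergence_of_strong_monotone (n : ℕ) (c : ℝ) (hc : 0 < c)
    (F : EuclideanSpace ℝ (Fin n) → EuclideanSpace ℝ (Fin n))
    (hmono : ∀ x y, ⟪F x - F y, x - y⟫ ≤ -c * ‖x - y‖ ^ 2)
    (xs : EuclideanSpace ℝ (Fin n)) (hzero : F xs = 0)
    (x : ℝ → EuclideanSpace ℝ (Fin n))
    (hx : ∀ t ≥ (0 : ℝ), HasDerivWithinAt x (F (x t)) (Set.Ici 0) t) :
    (∀ t ≥ (0 : ℝ), ‖x t - xs‖ ≤ Real.exp (-c * t) * ‖x 0 - xs‖) ∧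
      Filter.Tendsto x Filter.atTop (nhds xs) := by
  have decay : ∀ t ≥ (0 : ℝ), ‖x t - xs‖ ≤ exp (-c * t) * ‖x 0 - xs‖ := fun _ ht =>
    norm_sub_le_exp_mul_of_inner_deriv_le hx
      (fun s _ => by simpa only [hzero, sub_zero] using hmono (x s) xs) ht
  exact ⟨decay, tendsto_of_norm_sub_le_exp_mul hc decay⟩
end

section
/- Let C ⊆ ℝⁿ be a set and let ω : ℝⁿ → ℝⁿ satisfy the strict monotonicity condition ⟨ω(x) - ω(y), x - y⟩ < 0 for all x, y ∈ C with x ≠ y. Suppose x*, y* ∈ C each satisfy the variational inequality: ⟨ω(x*), z - x*⟩ ≤ 0 for all z ∈ C, and ⟨ω(y*), z - y*⟩ ≤ 0 for all z ∈ C. Then x* = y*. -/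
open scoped RealInnerProductSpace

section VariationalInequality

variable {E : Type*} [NormedAddCommGroup E] [InnerProductSpace ℝ E]

lemma inner_sub_sub_nonneg_of_inner_le_zero {u v x y : E}
    (hx : ⟪u, y - x⟫ ≤ 0) (hy : ⟪v, x - y⟫ ≤ 0) : 0 ≤ ⟪u - v, x - y⟫ := by
  have hsum : ⟪u - v, x - y⟫ = -⟪u, y - x⟫ - ⟪v, x - y⟫ := by
    rw [inner_sub_left, ← neg_sub y x, inner_neg_right]
  linarith

lemma subsingleton_variationalInequality_solutions_of_inner_sub_sub_neg {C : Set E} {ω : E → E}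
    (hmono : ∀ x ∈ C, ∀ y ∈ C, x ≠ y → ⟪ω x - ω y, x - y⟫ < 0) :
    {x ∈ C | ∀ z ∈ C, ⟪ω x, z - x⟫ ≤ 0}.Subsingleton := by
  rintro x ⟨hxC, hx⟩ y ⟨hyC, hy⟩
  by_contra hne
  exact (hmono x hxC y hyC hne).not_ge
    (inner_sub_sub_nonneg_of_inner_le_zero (hx y hyC) (hy x hxC))

end VariationalInequality

/-- Strict monotonicity of the pseudogradient on `C` implies uniqueness of
solutions of the variational inequality (hence of Nash equilibria). -/
theorem variational_inequality_unique_of_strict_monotone (n : ℕ)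
    (C : Set (EuclideanSpace ℝ (Fin n)))
    (ω : EuclideanSpace ℝ (Fin n) → EuclideanSpace ℝ (Fin n))
    (hmono : ∀ x ∈ C, ∀ y ∈ C, x ≠ y → ⟪ω x - ω y, x - y⟫ < 0)
    (xs ys : EuclideanSpace ℝ (Fin n)) (hxs : xs ∈ C) (hys : ys ∈ C)
    (hvx : ∀ z ∈ C, ⟪ω xs, z - xs⟫ ≤ 0) (hvy : ∀ z ∈ C, ⟪ω ys, z - ys⟫ ≤ 0) :
    xs = ys :=
  subsingleton_variationalInequality_solutions_of_inner_sub_sub_neg hmono ⟨hxs, hvx⟩ ⟨hys, hvy⟩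
end
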